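/- Let 𝒜 be an admissible Banach A-valued function algebra on X with 𝔄 = 𝒜 ∩ C(X). The map 𝒥 : Δ(𝔄) × Δ(A) → Δ(𝒜) defined by 𝒥(ψ,φ)(f) = ψ(φ∘f) is injective. -/
import Mathlib


open WeakDual

variable {X : Type*} [TopologicalSpace X] [CompactSpace X] [T2Space X] [Nonempty X]
variable {A : Type*} [NormedCommRing A] [NormedAlgebra ℂ A] [CompleteSpace A] [Nontrivial A]
variable {B : Type*} [NormedCommRing B] [NormedAlgebra ℂ B] [CompleteSpace B]

/-- The embedding of scalar-valued continuous functions into `A`-valued ones,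
`g ↦ g·𝟏`. -/
noncomputable def scalHom (X A : Type*) [TopologicalSpace X] [NormedCommRing A]
    [NormedAlgebra ℂ A] : C(X, ℂ) →ₐ[ℂ] C(X, A) :=
  AlgHom.compLeftContinuous ℂ (Algebra.ofId ℂ A) (continuous_algebraMap ℂ A)

/-- The scalar subalgebra `𝔄 = 𝒜 ∩ C(X)`, realized inside `C(X, ℂ)`: those scalar
functions `g` with `g·𝟏 ∈ 𝒜`. -/
noncomputable def scalarSub (ι : B →ₐ[ℂ] C(X, A)) : Subalgebra ℂ C(X, ℂ) :=
  Subalgebra.comap (scalHom X A) (AlgHom.range ι)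

/-- The map 𝒥 : Δ(𝔄) × Δ(A) → Δ(𝒜), 𝒥(ψ,φ)(f) = ψ(φ∘f), is injective. -/
theorem stmt12
(ι : B →ₐ[ℂ] C(X, A)) (hinj : Function.Injective ι)
    (κ : A →ₐ[ℂ] B) (hκ : ∀ a : A, ι (κ a) = ContinuousMap.const X a)
    (hκnorm : ∃ c₁ > (0:ℝ), ∃ c₂ > (0:ℝ), ∀ a : A, c₁ * ‖a‖ ≤ ‖κ a‖ ∧ ‖κ a‖ ≤ c₂ * ‖a‖)
    (hdom : ∀ f : B, ‖ι f‖ ≤ ‖f‖)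
    (hsep : ∀ x y : X, x ≠ y → ∀ M : Ideal A, M.IsMaximal → ∃ f : B, ι f x - ι f y ∉ M)
    (hss : Ideal.jacobson (⊥ : Ideal A) = ⊥)
    (hadm : ∀ (f : B) (φ : A →ₐ[ℂ] ℂ), ∃ g : B, ∀ x : X, ι g x = algebraMap ℂ A (φ (ι f x)))
    (ψ ψ' : ↥(scalarSub ι) →ₐ[ℂ] ℂ) (φ φ' : A →ₐ[ℂ] ℂ)
    (h : ∀ (f : B) (g₀ g₀' : ↥(scalarSub ι)),
      (∀ x : X, (g₀ : C(X, ℂ)) x = φ (ι f x)) →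
      (∀ x : X, (g₀' : C(X, ℂ)) x = φ' (ι f x)) → ψ g₀ = ψ' g₀') :
    ψ = ψ' ∧ φ = φ' := by
  have hφ : φ = φ' := by
    ext a
    have key := h (κ a) (algebraMap ℂ _ (φ a)) (algebraMap ℂ _ (φ' a)) ?_ ?_
    · simpa using key
    · intro x; rw [hκ a]; rfl
    · intro x; rw [hκ a]; rfl
  refine ⟨?_, hφ⟩
  ext g₀
  obtain ⟨f, hf⟩ : ∃ f : B, ι f = scalHom X A (g₀ : C(X, ℂ)) := g₀.2
  have key : ∀ x : X, (g₀ : C(X, ℂ)) x = φ (ι f x) := by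
    intro x
    rw [hf]
    show _ = φ (algebraMap ℂ A _)
    rw [AlgHom.commutes]
    simp
  exact h f g₀ g₀ key (fun x => hφ ▸ key x)
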